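/- Let P, Q : ℝ × ℝ → ℝ be continuously differentiable on all of ℝ × ℝ and satisfy, at every point, the relations ∂P/∂x = ∂Q/∂y and ∂Q/∂x = ∂P/∂y. Then there exist differentiable functions F, G : ℝ × ℝ → ℝ such that at every point ∂F/∂x = P, ∂F/∂y = Q, ∂G/∂x = Q, and ∂G/∂y = P. Consequently both 1-forms P dx + Q dy and Q dx + P dy are exact, so the integral ∫ f(u) du = ∫ (P dx + Q dy) + δ(Q dx + P dy) of the twocomplex function f = P + δQ between two points is independent of the path connecting the points. -/

import Mathlib

/-!
The relations say that `P + Q` is annihilated by `∂ₓ - ∂ᵧ` and `P - Q` by `∂ₓ + ∂ᵧ`, so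
`P + Q = a (x + y)` and `P - Q = b (x - y)` for continuous `a`, `b`. With primitives `f' = a / 2`,
`g' = b / 2`, the potentials are `F = f (x + y) + g (x - y)` and `G = f (x + y) - g (x - y)`.
-/

theorem Differentiable.apply_add_smul_eq_of_fderiv_apply_eq_zero
    {𝕜 E G : Type*} [RCLike 𝕜] [NormedAddCommGroup E] [NormedSpace 𝕜 E]
    [NormedAddCommGroup G] [NormedSpace 𝕜 G] {A : E → G} (hA : Differentiable 𝕜 A) {v : E}
    (hv : ∀ p, fderiv 𝕜 A p v = 0) (p : E) (t : 𝕜) : A (p + t • v) = A p := by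
  have hline : ∀ s : 𝕜, HasDerivAt (fun s : 𝕜 => A (p + s • v)) 0 s := fun s => by
    simpa [Function.comp_def, hv] using (hA _).hasFDerivAt.comp_hasDerivAt s
      (((hasDerivAt_id s).smul_const v).const_add p)
  simpa using is_const_of_deriv_eq_zero (fun s => (hline s).differentiableAt)
    (fun s => (hline s).deriv) t 0

section Shear

variable {G : Type*} [NormedAddCommGroup G] [NormedSpace ℝ G] {A : ℝ × ℝ → G}

theorem Differentiable.eq_comp_add_of_fderiv_apply_eq (hA : Differentiable ℝ A)
    (h : ∀ p, fderiv ℝ A p (1, 0) = fderiv ℝ A p (0, 1)) (p : ℝ × ℝ) :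
    A p = A (p.1 + p.2, 0) := by
  have hv : ∀ q, fderiv ℝ A q (1, -1) = 0 := fun q => by
    rw [show ((1 : ℝ), (-1 : ℝ)) = (1, 0) - (0, 1) by simp, map_sub, h, sub_self]
  rw [← hA.apply_add_smul_eq_of_fderiv_apply_eq_zero hv p p.2]
  congr 1; ext <;> simp

theorem Differentiable.eq_comp_sub_of_fderiv_apply_eq_neg (hA : Differentiable ℝ A)
    (h : ∀ p, fderiv ℝ A p (1, 0) = -fderiv ℝ A p (0, 1)) (p : ℝ × ℝ) :
    A p = A (p.1 - p.2, 0) := by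
  have hv : ∀ q, fderiv ℝ A q (1, 1) = 0 := fun q => by
    rw [show ((1 : ℝ), (1 : ℝ)) = (1, 0) + (0, 1) by simp, map_add, h, neg_add_cancel]
  rw [← hA.apply_add_smul_eq_of_fderiv_apply_eq_zero hv p (-p.2)]
  congr 1; ext <;> simp [sub_eq_add_neg]

end Shear

theorem exists_fderiv_eq_comp_add_add_comp_sub {G : Type*} [NormedAddCommGroup G]
    [NormedSpace ℝ G] [CompleteSpace G] {a b : ℝ → G} (ha : Continuous a) (hb : Continuous b) :
    ∃ φ : ℝ × ℝ → G, Differentiable ℝ φ ∧ ∀ p : ℝ × ℝ,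
      fderiv ℝ φ p (1, 0) = a (p.1 + p.2) + b (p.1 - p.2) ∧
      fderiv ℝ φ p (0, 1) = a (p.1 + p.2) - b (p.1 - p.2) := by
  let f : ℝ → G := fun s => ∫ t in (0 : ℝ)..s, a t
  let g : ℝ → G := fun s => ∫ t in (0 : ℝ)..s, b t
  have hf : ∀ s, HasDerivAt f (a s) s := fun s => (ha.integral_hasStrictDerivAt 0 s).hasDerivAt
  have hg : ∀ s, HasDerivAt g (b s) s := fun s => (hb.integral_hasStrictDerivAt 0 s).hasDerivAt
  let L := ContinuousLinearMap.fst ℝ ℝ ℝ + ContinuousLinearMap.snd ℝ ℝ ℝ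
  let M := ContinuousLinearMap.fst ℝ ℝ ℝ - ContinuousLinearMap.snd ℝ ℝ ℝ
  have hφ := fun p : ℝ × ℝ =>
    ((hf (L p)).hasFDerivAt.comp p L.hasFDerivAt).add ((hg (M p)).hasFDerivAt.comp p M.hasFDerivAt)
  refine ⟨f ∘ L + g ∘ M, fun p => (hφ p).differentiableAt, fun p => ?_⟩
  rw [(hφ p).fderiv]
  simp [L, M, sub_eq_add_neg]

/-- If P, Q are C¹ on ℝ × ℝ and satisfy ∂P/∂x = ∂Q/∂y and ∂Q/∂x = ∂P/∂y
everywhere, then the 1-forms P dx + Q dy and Q dx + P dy are exact: there are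
differentiable potentials F, G with ∂F/∂x = P, ∂F/∂y = Q, ∂G/∂x = Q,
∂G/∂y = P, so the twocomplex integral is path independent. -/
theorem twocomplex_path_independence (P Q : ℝ × ℝ → ℝ)
    (hP : ContDiff ℝ 1 P) (hQ : ContDiff ℝ 1 Q)
    (hCR1 : ∀ p : ℝ × ℝ, fderiv ℝ P p (1, 0) = fderiv ℝ Q p (0, 1))
    (hCR2 : ∀ p : ℝ × ℝ, fderiv ℝ Q p (1, 0) = fderiv ℝ P p (0, 1)) :
    ∃ F G : ℝ × ℝ → ℝ, Differentiable ℝ F ∧ Differentiable ℝ G ∧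
      ∀ p : ℝ × ℝ,
        fderiv ℝ F p (1, 0) = P p ∧ fderiv ℝ F p (0, 1) = Q p ∧
        fderiv ℝ G p (1, 0) = Q p ∧ fderiv ℝ G p (0, 1) = P p := by
  have hPd := hP.differentiable one_ne_zero
  have hQd := hQ.differentiable one_ne_zero
  have hsum (p : ℝ × ℝ) : P p + Q p = P (p.1 + p.2, 0) + Q (p.1 + p.2, 0) :=
    (hPd.add hQd).eq_comp_add_of_fderiv_apply_eq (fun q => by
      simp only [fderiv_add (hPd q) (hQd q), add_apply, hCR1, hCR2, add_comm]) p
  have hdiff (p : ℝ × ℝ) : P p - Q p = P (p.1 - p.2, 0) - Q (p.1 - p.2, 0) :=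
    (hPd.sub hQd).eq_comp_sub_of_fderiv_apply_eq_neg (fun q => by
      simp only [fderiv_sub (hPd q) (hQd q), sub_apply, hCR1, hCR2, neg_sub]) p
  have hPc := hP.continuous
  have hQc := hQ.continuous
  obtain ⟨F, hFd, hF⟩ := exists_fderiv_eq_comp_add_add_comp_sub
    (a := fun s => (P (s, 0) + Q (s, 0)) / 2) (b := fun s => (P (s, 0) - Q (s, 0)) / 2)
    (by fun_prop) (by fun_prop)
  obtain ⟨G, hGd, hG⟩ := exists_fderiv_eq_comp_add_add_comp_sub
    (a := fun s => (P (s, 0) + Q (s, 0)) / 2) (b := fun s => (Q (s, 0) - P (s, 0)) / 2)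
    (by fun_prop) (by fun_prop)
  refine ⟨F, G, hFd, hGd, fun p => ?_⟩
  rw [(hF p).1, (hF p).2, (hG p).1, (hG p).2]
  refine ⟨?_, ?_, ?_, ?_⟩ <;> linarith [hsum p, hdiff p]
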